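/- The lattice D₄^E = {(x,x,y) ∈ E³ : x ≡ y mod θ} (with the standard Hermitian form on ℂ³) has exactly 24 vectors of norm 3, namely the unit scalar multiples of (ω^i, ω^i, 1) for i = 0,1,2 and of (0,0,θ). -/

import Mathlib

noncomputable section
open Finset

def ω : ℂ := -1/2 + (Real.sqrt 3 / 2) * Complex.I
def θ : ℂ := ω - (starRingEnd ℂ) ω
def Eis : Subring ℂ := Subring.closure {ω}

/-- The standard Hermitian form on `ℂ³`. -/
def herm3 (x y : Fin 3 → ℂ) : ℂ := ∑ i, x i * (starRingEnd ℂ) (y i)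

/-- `D₄^E = {(x,x,y) ∈ Eis³ : x ≡ y mod θ}`. -/
def D4 : Set (Fin 3 → ℂ) :=
  {x | (∀ i, x i ∈ Eis) ∧ x 0 = x 1 ∧ ∃ e ∈ Eis, x 0 - x 2 = θ * e}

/-- The six units of the Eisenstein integers. -/
def units6 : Set ℂ := {1, -1, ω, -ω, ω ^ 2, -ω ^ 2}

/-!
Write `x = (x₀, x₀, x₂)`, so that `2 N(x₀) + N(x₂) = 3` with integral norms `N`. Either `x₀ = 0`
and `N(x₂) = 3`, so `θ ∣ x₂` (for `x₂ = c + dω`, `c² - cd + d² = 3` forces `3 ∣ c + d`) and `x₂`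
is a unit times `θ`; or `x₀` and `x₂` are units with `x₀ ≡ x₂ mod θ`, and then `x₀ / x₂` is a unit
`≡ 1 mod θ`, that is a power of `ω`, the units `-ωⁱ` being `≡ -1`. The resulting `6 · 4` vectors
are distinct because the six units are the powers of the primitive sixth root of unity `-ω`.
-/

open Complex ComplexConjugate

lemma ω_re : ω.re = -1 / 2 := by simp [ω]

lemma ω_im : ω.im = √3 / 2 := by simp [ω]

lemma ω_sq : ω ^ 2 = -1 - ω := by
  apply Complex.ext <;>
    simp only [sq, mul_re, mul_im, sub_re, sub_im, neg_re, neg_im, one_re, one_im, ω_re, ω_im] <;>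
    nlinarith [Real.sq_sqrt (show (0 : ℝ) ≤ 3 by norm_num)]

lemma conj_ω : conj ω = -1 - ω := by
  apply Complex.ext <;> simp only [conj_re, conj_im, sub_re, sub_im, neg_re, neg_im, one_re, one_im,
    ω_re, ω_im] <;> norm_num

lemma ω_pow_three : ω ^ 3 = 1 := by linear_combination (ω - 1) * ω_sq

lemma ω_ne_one : ω ≠ 1 := fun h => by simpa [ω_im] using congrArg Complex.im h

lemma isPrimitiveRoot_ω : IsPrimitiveRoot ω 3 := by
  have : Fact (Nat.Prime 3) := ⟨Nat.prime_three⟩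
  simpa [orderOf_eq_prime ω_pow_three ω_ne_one] using IsPrimitiveRoot.orderOf ω

lemma isPrimitiveRoot_neg_ω : IsPrimitiveRoot (-ω) 6 := by
  convert IsPrimitiveRoot.orderOf (-ω)
  rw [neg_eq_neg_one_mul, (Commute.all _ _).orderOf_mul_eq_mul_orderOf_of_coprime]
  · simp [← isPrimitiveRoot_ω.eq_orderOf]
  · simp [← isPrimitiveRoot_ω.eq_orderOf, Nat.odd_iff]

lemma θ_eq : θ = 1 + 2 * ω := by rw [θ, conj_ω]; ring

lemma ω_sub_one : ω - 1 = θ * (1 + ω) := by rw [θ_eq]; linear_combination -2 * ω_sq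

lemma normSq_ω : normSq ω = 1 := by
  have : (normSq ω : ℂ) = 1 := by rw [← mul_conj, conj_ω]; linear_combination -ω_sq
  exact_mod_cast this

lemma normSq_θ : normSq θ = 3 := by
  simp [normSq_apply, θ, ω_re, ω_im]

lemma θ_ne_zero : θ ≠ 0 := by rw [← normSq_pos, normSq_θ]; norm_num

def eis (a b : ℤ) : ℂ := a + b * ω

lemma eis_mul (a b c d : ℤ) : eis a b * eis c d = eis (a * c - b * d) (a * d + b * c - b * d) := by
  simp only [eis]; push_cast; linear_combination (b * d : ℂ) * ω_sq

lemma conj_eis (a b : ℤ) : conj (eis a b) = eis (a - b) (-b) := by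
  simp only [eis, map_add, map_mul, map_intCast, conj_ω]; push_cast; ring

lemma θ_mul_eis (p q : ℤ) : θ * eis p q = eis (p - 2 * q) (2 * p - q) := by
  simp only [eis, θ_eq]; push_cast; linear_combination (2 * q : ℂ) * ω_sq

lemma eis_inj {a b c d : ℤ} : eis a b = eis c d ↔ a = c ∧ b = d := by
  refine ⟨fun h => ?_, by rintro ⟨rfl, rfl⟩; rfl⟩
  have hre := congrArg Complex.re h
  have him := congrArg Complex.im h
  simp only [eis, add_re, add_im, mul_re, mul_im, intCast_re, intCast_im, ω_re, ω_im, zero_mul,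
    sub_zero, add_zero, zero_add] at hre him
  have hbd : b = d := by
    exact_mod_cast mul_right_cancel₀ (by positivity : √3 / 2 ≠ 0) him
  subst hbd
  exact ⟨by exact_mod_cast add_right_cancel hre, rfl⟩

lemma normSq_eis (a b : ℤ) : normSq (eis a b) = ((a ^ 2 - a * b + b ^ 2 : ℤ) : ℝ) := by
  have : (normSq (eis a b) : ℂ) = ((a ^ 2 - a * b + b ^ 2 : ℤ) : ℂ) := by
    rw [← mul_conj, conj_eis, eis_mul]; simp only [eis]; push_cast; ring
  exact_mod_cast this

lemma mem_Eis_iff {z : ℂ} : z ∈ Eis ↔ ∃ a b, eis a b = z := by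
  refine ⟨fun hz => ?_, ?_⟩
  · induction hz using Subring.closure_induction with
    | mem x hx => exact ⟨0, 1, by rw [Set.mem_singleton_iff.mp hx]; simp [eis]⟩
    | zero => exact ⟨0, 0, by simp [eis]⟩
    | one => exact ⟨1, 0, by simp [eis]⟩
    | add x y _ _ hx hy =>
      obtain ⟨a, b, rfl⟩ := hx
      obtain ⟨c, d, rfl⟩ := hy
      exact ⟨a + c, b + d, by simp only [eis]; push_cast; ring⟩
    | neg x _ hx =>
      obtain ⟨a, b, rfl⟩ := hx
      exact ⟨-a, -b, by simp only [eis]; push_cast; ring⟩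
    | mul x y _ _ hx hy =>
      obtain ⟨a, b, rfl⟩ := hx
      obtain ⟨c, d, rfl⟩ := hy
      exact ⟨_, _, (eis_mul a b c d).symm⟩
  · rintro ⟨a, b, rfl⟩
    exact add_mem (intCast_mem _ a) (mul_mem (intCast_mem _ b) (Subring.subset_closure rfl))

lemma ω_mem_Eis : ω ∈ Eis := Subring.subset_closure rfl

lemma θ_mem_Eis : θ ∈ Eis := mem_Eis_iff.mpr ⟨1, 2, by simp [eis, θ_eq]⟩

lemma conj_mem_Eis {z : ℂ} (hz : z ∈ Eis) : conj z ∈ Eis := by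
  obtain ⟨a, b, rfl⟩ := mem_Eis_iff.mp hz
  exact mem_Eis_iff.mpr ⟨_, _, (conj_eis a b).symm⟩

lemma sq_sub_mul_add_sq_eq_one_cases {a b : ℤ} (h : a ^ 2 - a * b + b ^ 2 = 1) :
    (a = 1 ∧ b = 0) ∨ (a = -1 ∧ b = 0) ∨ (a = 0 ∧ b = 1) ∨ (a = 0 ∧ b = -1) ∨
      (a = -1 ∧ b = -1) ∨ (a = 1 ∧ b = 1) := by
  have ha : -1 ≤ a ∧ a ≤ 1 := by constructor <;> nlinarith [sq_nonneg (2 * b - a)]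
  have hb : -1 ≤ b ∧ b ≤ 1 := by constructor <;> nlinarith [sq_nonneg (2 * a - b)]
  obtain ⟨ha₁, ha₂⟩ := ha
  obtain ⟨hb₁, hb₂⟩ := hb
  interval_cases a <;> interval_cases b <;> omega

lemma exists_normSq_eq_natCast_of_mem_Eis {z : ℂ} (hz : z ∈ Eis) : ∃ n : ℕ, normSq z = n := by
  obtain ⟨a, b, rfl⟩ := mem_Eis_iff.mp hz
  refine ⟨(a ^ 2 - a * b + b ^ 2).toNat, ?_⟩
  rw [normSq_eis, ← Int.cast_natCast, Int.toNat_of_nonneg (by nlinarith [sq_nonneg (a - b)])]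

lemma mem_units6_of_normSq_eq_one {z : ℂ} (hz : z ∈ Eis) (h : normSq z = 1) : z ∈ units6 := by
  obtain ⟨a, b, rfl⟩ := mem_Eis_iff.mp hz
  rw [normSq_eis] at h
  rcases sq_sub_mul_add_sq_eq_one_cases (by exact_mod_cast h) with
    ⟨rfl, rfl⟩ | ⟨rfl, rfl⟩ | ⟨rfl, rfl⟩ | ⟨rfl, rfl⟩ | ⟨rfl, rfl⟩ | ⟨rfl, rfl⟩ <;>
    simp [units6, eis, ω_sq, sub_eq_add_neg, add_comm]

lemma exists_eq_ω_pow {z : ℂ} (hz : z ∈ Eis) (h : normSq z = 1)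
    (hθ : ∃ e ∈ Eis, z - 1 = θ * e) : ∃ i : Fin 3, z = ω ^ (i : ℕ) := by
  obtain ⟨a, b, rfl⟩ := mem_Eis_iff.mp hz
  obtain ⟨e, he, hze⟩ := hθ
  obtain ⟨p, q, rfl⟩ := mem_Eis_iff.mp he
  have hsub : eis a b - 1 = eis (a - 1) b := by simp only [eis]; push_cast; ring
  -- the coordinates of a multiple of `θ` have sum `≡ 0 mod 3`, which rules out the units `-ωⁱ`
  rw [hsub, θ_mul_eis, eis_inj] at hze
  rw [normSq_eis] at h
  rcases sq_sub_mul_add_sq_eq_one_cases (by exact_mod_cast h) with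
    ⟨rfl, rfl⟩ | ⟨rfl, rfl⟩ | ⟨rfl, rfl⟩ | ⟨rfl, rfl⟩ | ⟨rfl, rfl⟩ | ⟨rfl, rfl⟩
  · exact ⟨0, by simp [eis]⟩
  · omega
  · exact ⟨1, by simp [eis]⟩
  · omega
  · exact ⟨2, by simp [eis, ω_sq, sub_eq_add_neg]⟩
  · omega

lemma exists_mem_units6_mul_θ {z : ℂ} (hz : z ∈ Eis) (h : normSq z = 3) :
    ∃ u ∈ units6, z = u * θ := by
  obtain ⟨c, d, rfl⟩ := mem_Eis_iff.mp hz
  have hN : c ^ 2 - c * d + d ^ 2 = 3 := by rw [normSq_eis] at h; exact_mod_cast h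
  obtain ⟨k, hk⟩ : (3 : ℤ) ∣ c + d :=
    Int.prime_three.dvd_of_dvd_pow (n := 2) ⟨1 + c * d, by linear_combination hN⟩
  have hθu : eis c d = θ * eis (2 * k - c) (k - c) := by
    rw [θ_mul_eis, eis_inj]; omega
  refine ⟨eis (2 * k - c) (k - c), mem_units6_of_normSq_eq_one (mem_Eis_iff.mpr ⟨_, _, rfl⟩) ?_,
    hθu.trans (mul_comm _ _)⟩
  have := congrArg normSq hθu
  rw [normSq_mul, normSq_θ, h] at this
  linarith

lemma mem_Eis_of_mem_units6 {u : ℂ} (hu : u ∈ units6) : u ∈ Eis := by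
  rcases hu with rfl | rfl | rfl | rfl | rfl | rfl <;>
    simp only [neg_mem_iff, one_mem, ω_mem_Eis, pow_mem ω_mem_Eis]

lemma normSq_of_mem_units6 {u : ℂ} (hu : u ∈ units6) : normSq u = 1 := by
  rcases hu with rfl | rfl | rfl | rfl | rfl | rfl <;> simp [normSq_ω]

lemma ne_zero_of_mem_units6 {u : ℂ} (hu : u ∈ units6) : u ≠ 0 := by
  rw [← normSq_pos, normSq_of_mem_units6 hu]; exact one_pos

lemma units6_eq_range : units6 = Set.range fun k : Fin 6 => (-ω) ^ (k : ℕ) := by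
  have h3 : (-ω) ^ 3 = -1 := by rw [neg_pow, ω_pow_three]; norm_num
  have h4 : (-ω) ^ 4 = ω := by linear_combination ω * ω_pow_three
  have h5 : (-ω) ^ 5 = -ω ^ 2 := by linear_combination -ω ^ 2 * ω_pow_three
  ext z
  simp only [units6, Set.mem_insert_iff, Set.mem_singleton_iff, Set.mem_range,
    Fin.exists_fin_succ, Fin.val_zero, Fin.val_succ, Fin.exists_fin_zero, pow_zero, zero_add,
    pow_one, Nat.reduceAdd, even_two, Even.neg_pow, h3, h4, h5, @eq_comm _ z]
  tauto

lemma ncard_units6 : units6.ncard = 6 := by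
  rw [units6_eq_range, Set.ncard_range_of_injective, Nat.card_eq_fintype_card, Fintype.card_fin]
  intro j k h
  exact Fin.ext (isPrimitiveRoot_neg_ω.pow_inj j.isLt k.isLt h)

lemma herm3_self (x : Fin 3 → ℂ) :
    herm3 x x = ((normSq (x 0) + normSq (x 1) + normSq (x 2) : ℝ) : ℂ) := by
  simp [herm3, Fin.sum_univ_three, mul_conj]

lemma herm3_smul_self (u : ℂ) (x : Fin 3 → ℂ) :
    herm3 (u • x) (u • x) = normSq u * herm3 x x := by
  simp only [herm3_self, Pi.smul_apply, smul_eq_mul, normSq_mul]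
  push_cast; ring

lemma smul_mem_D4 {u : ℂ} {x : Fin 3 → ℂ} (hu : u ∈ Eis) (hx : x ∈ D4) : u • x ∈ D4 := by
  obtain ⟨hE, h01, e, he, hθ⟩ := hx
  refine ⟨fun i => mul_mem hu (hE i), by simp [h01], u * e, mul_mem hu he, ?_⟩
  simp only [Pi.smul_apply, smul_eq_mul]
  linear_combination u * hθ

def minimalRep : Option (Fin 3) → Fin 3 → ℂ
  | some i => ![ω ^ (i : ℕ), ω ^ (i : ℕ), 1]
  | none => ![0, 0, θ]

lemma minimalRep_mem_D4 (t : Option (Fin 3)) : minimalRep t ∈ D4 := by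
  cases t with
  | none => exact ⟨fun i => by fin_cases i <;> simp [minimalRep, θ_mem_Eis], rfl, -1, by simp,
      by simp [minimalRep]⟩
  | some i =>
    refine ⟨fun j => by fin_cases j <;> simp [minimalRep, pow_mem ω_mem_Eis], rfl,
      (1 + ω) * ∑ j ∈ range i, ω ^ j, mul_mem (add_mem (one_mem _) ω_mem_Eis)
        (sum_mem fun j _ => pow_mem ω_mem_Eis j), ?_⟩
    simp [minimalRep, ← mul_assoc, ← ω_sub_one, mul_geom_sum]

lemma herm3_minimalRep (t : Option (Fin 3)) : herm3 (minimalRep t) (minimalRep t) = 3 := by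
  cases t <;> simp [herm3_self, minimalRep, normSq_θ, normSq_ω, one_add_one_eq_two,
    two_add_one_eq_three]

lemma exists_eq_smul_minimalRep {x : Fin 3 → ℂ} (hx : x ∈ D4) (h : herm3 x x = 3) :
    ∃ u ∈ units6, ∃ t, x = u • minimalRep t := by
  obtain ⟨hE, h01, e, he, hθ⟩ := hx
  obtain ⟨m, hm⟩ := exists_normSq_eq_natCast_of_mem_Eis (hE 0)
  obtain ⟨n, hn⟩ := exists_normSq_eq_natCast_of_mem_Eis (hE 2)
  rw [herm3_self, ← h01, hm, hn] at h
  have hmn : m + m + n = 3 := by exact_mod_cast h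
  obtain ⟨rfl, rfl⟩ | ⟨rfl, rfl⟩ : (m = 0 ∧ n = 3) ∨ (m = 1 ∧ n = 1) := by omega
  · have hx0 : x 0 = 0 := normSq_eq_zero.mp (by simpa using hm)
    obtain ⟨u, hu, hx2⟩ := exists_mem_units6_mul_θ (hE 2) (by simpa using hn)
    refine ⟨u, hu, none, ?_⟩
    ext j; fin_cases j <;> simp [minimalRep, hx0, ← h01, hx2]
  · have hx2 : x 2 * conj (x 2) = 1 := by simp [mul_conj, hn]
    -- the unit `x 0 / x 2` is `≡ 1 mod θ`, hence a power of `ω`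
    obtain ⟨i, hi⟩ := exists_eq_ω_pow (z := x 0 * conj (x 2))
      (mul_mem (hE 0) (conj_mem_Eis (hE 2))) (by simp [normSq_mul, hm, hn])
      ⟨e * conj (x 2), mul_mem he (conj_mem_Eis (hE 2)), by
        rw [← mul_assoc, ← hθ, ← hx2]; ring⟩
    have hx0 : x 0 = ω ^ (i : ℕ) * x 2 := by rw [← hi, mul_assoc, mul_comm (conj _), hx2, mul_one]
    refine ⟨x 2, mem_units6_of_normSq_eq_one (hE 2) (by simpa using hn), some i, ?_⟩
    ext j; fin_cases j <;> simp [minimalRep, ← h01, hx0, mul_comm]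

lemma injOn_smul_minimalRep :
    Set.InjOn (fun p : ℂ × Option (Fin 3) => p.1 • minimalRep p.2) (units6 ×ˢ Set.univ) := by
  rintro ⟨u, s⟩ ⟨hu, -⟩ ⟨u', t⟩ ⟨hu', -⟩ h
  have h0 := congrFun h 0
  have h2 := congrFun h 2
  have hunit {v : ℂ} (hv : v ∈ units6) (i : Fin 3) : v * ω ^ (i : ℕ) ≠ 0 :=
    mul_ne_zero (ne_zero_of_mem_units6 hv) (pow_ne_zero _ (isPrimitiveRoot_ω.ne_zero (by norm_num)))
  cases s <;> cases t <;>
    simp only [minimalRep, Pi.smul_apply, smul_eq_mul, Matrix.cons_val_zero, Matrix.cons_val,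
      mul_zero, mul_one] at h0 h2
  case none.none => rw [mul_right_cancel₀ θ_ne_zero h2]
  case none.some j => exact absurd h0.symm (hunit hu' j)
  case some.none i => exact absurd h0 (hunit hu i)
  case some.some i j =>
    subst h2
    rw [Fin.ext (isPrimitiveRoot_ω.pow_inj i.isLt j.isLt
      (mul_left_cancel₀ (ne_zero_of_mem_units6 hu) h0))]

lemma setOf_herm3_eq_three_eq_image :
    {x | x ∈ D4 ∧ herm3 x x = 3} =
      (fun p : ℂ × Option (Fin 3) => p.1 • minimalRep p.2) '' (units6 ×ˢ Set.univ) := by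
  ext x
  constructor
  · rintro ⟨hx, h⟩
    obtain ⟨u, hu, t, rfl⟩ := exists_eq_smul_minimalRep hx h
    exact ⟨(u, t), ⟨hu, trivial⟩, rfl⟩
  · rintro ⟨⟨u, t⟩, ⟨hu, -⟩, rfl⟩
    exact ⟨smul_mem_D4 (mem_Eis_of_mem_units6 hu) (minimalRep_mem_D4 t), by
      rw [herm3_smul_self, herm3_minimalRep, normSq_of_mem_units6 hu]; simp⟩

/-- `D₄^E` has exactly 24 vectors of norm 3, namely the unit multiples of
`(ωⁱ,ωⁱ,1)` and of `(0,0,θ)`. -/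
theorem stmt5 :
    {x | x ∈ D4 ∧ herm3 x x = 3} =
      {x | ∃ u ∈ units6,
        (∃ i : Fin 3, x = u • ![ω ^ (i : ℕ), ω ^ (i : ℕ), 1]) ∨ x = u • ![0, 0, θ]} ∧
    {x | x ∈ D4 ∧ herm3 x x = 3}.ncard = 24 := by
  rw [setOf_herm3_eq_three_eq_image]
  refine ⟨?_, ?_⟩
  · ext x
    simp [minimalRep, Option.exists, or_comm, eq_comm]
  · rw [injOn_smul_minimalRep.ncard_image, Set.ncard_prod, ncard_units6, Set.ncard_univ]
    simp
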